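/- Let X be a real Banach space, let (A_n) be an approximation scheme in X, and let Y be a closed linear subspace of X (with the norm inherited from X). If Y is far from (A_n), i.e., there exists c > 0 with E(S(Y), A_n) ≥ c for every n, then Y satisfies Shapiro's Theorem relative to (A_n): for every nonincreasing sequence of nonnegative reals ε_n → 0 there exists y ∈ Y such that there is no constant C with E(y,A_n) ≤ C ε_n for all n. -/

import Mathlib

open Metric Filter Pointwise

/-- `(A, K)` is an approximation scheme on `X`: the sets `A n` form a strictly increasing
chain, `A n + A n ⊆ A (K n)` with `K n ≥ n`, each `A n` is closed under scalar
multiplication, and `⋃ n, A n` is dense in `X`. -/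
def IsApproximationScheme {X : Type*} [NormedAddCommGroup X] [NormedSpace ℝ X]
    (A : ℕ → Set X) (K : ℕ → ℕ) : Prop :=
  (∀ n, A n ⊂ A (n + 1)) ∧
  (∀ n, n ≤ K n ∧ A n + A n ⊆ A (K n)) ∧
  (∀ (n : ℕ) (c : ℝ), c • A n ⊆ A n) ∧
  Dense (⋃ n, A n)

/-- Admissible error sequences: nonnegative, nonincreasing, tending to `0`. -/
def NullSeq (ε : ℕ → ℝ) : Prop :=
  (∀ n, 0 ≤ ε n) ∧ Antitone ε ∧ Tendsto ε atTop (nhds 0)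

open Topology

/-!
Suppose every `y ∈ Y` satisfied `E(y, A n) ≤ C ε n` for some `C`. By Baire's theorem in the
Banach space `Y`, one of the closed sets `{y | ∀ n, E(y, A n) ≤ m ε n}` contains a ball
`B(y₀, r)` of `Y`. Since `A n + A n ⊆ A (K n)` and `A n` is stable under scalars,
`x ↦ E(x, A n)` is a seminorm up to the shift `n ↦ K n`, so comparing `y₀` with `y₀ + (r/2) z`
gives `r E(z, A (K n)) ≤ 4 m ε n` for every unit vector `z ∈ Y`. The right-hand side tends
to `0`, while farness provides unit vectors `z` with `E(z, A (K n)) > c/2`.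
-/

theorem Metric.infDist_add_le_of_add_subset {E : Type*} [SeminormedAddCommGroup E]
    {s₁ s₂ t : Set E} (hs₁ : s₁.Nonempty) (hs₂ : s₂.Nonempty) (hst : s₁ + s₂ ⊆ t) (x y : E) :
    infDist (x + y) t ≤ infDist x s₁ + infDist y s₂ := by
  have h : ∀ a ∈ s₁, ∀ b ∈ s₂, infDist (x + y) t ≤ dist x a + dist y b := fun a ha b hb =>
    (infDist_le_dist_of_mem (hst (Set.add_mem_add ha hb))).trans (dist_add_add_le x y a b)
  suffices infDist (x + y) t - infDist x s₁ ≤ infDist y s₂ by linarith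
  refine (le_infDist hs₂).2 fun b hb => ?_
  suffices infDist (x + y) t - dist y b ≤ infDist x s₁ by linarith
  exact (le_infDist hs₁).2 fun a ha => by linarith [h a ha b hb]

theorem Metric.infDist_smul_of_forall_smul_subset {𝕜 E : Type*} [NormedDivisionRing 𝕜]
    [SeminormedAddCommGroup E] [Module 𝕜 E] [NormSMulClass 𝕜 E] {s : Set E}
    (hs : ∀ a : 𝕜, a • s ⊆ s) {a : 𝕜} (ha : a ≠ 0) (x : E) :
    infDist (a • x) s = ‖a‖ * infDist x s := by
  have hsa : a • s = s := (hs a).antisymm ((Set.subset_smul_set_iff₀ ha).2 (hs a⁻¹))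
  rw [← infDist_smul₀ ha, hsa]

section

variable {E : Type*} [SeminormedAddCommGroup E] [NormedSpace ℝ E] {s t : Set E}

theorem mul_infDist_le_of_infDist_add_smul_le (hs : s.Nonempty) (hst : s + s ⊆ t)
    (hs_smul : ∀ a : ℝ, a • s ⊆ s) (ht_smul : ∀ a : ℝ, a • t ⊆ t) {x z : E} {a b : ℝ}
    (ha : 0 < a) (hx : infDist x s ≤ b) (hxz : infDist (x + a • z) s ≤ b) :
    a * infDist z t ≤ 2 * b := by
  have hneg : infDist ((-1 : ℝ) • x) s = infDist x s := by
    rw [infDist_smul_of_forall_smul_subset hs_smul (by norm_num), norm_neg, norm_one, one_mul]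
  calc a * infDist z t = infDist ((x + a • z) + (-1 : ℝ) • x) t := by
        rw [show x + a • z + (-1 : ℝ) • x = a • z by module,
          infDist_smul_of_forall_smul_subset ht_smul ha.ne', Real.norm_of_nonneg ha.le]
    _ ≤ infDist (x + a • z) s + infDist ((-1 : ℝ) • x) s :=
        infDist_add_le_of_add_subset hs hs hst _ _
    _ ≤ 2 * b := by linarith

theorem mul_infDist_le_of_forall_dist_lt (hs : s.Nonempty) (hst : s + s ⊆ t)
    (hs_smul : ∀ a : ℝ, a • s ⊆ s) (ht_smul : ∀ a : ℝ, a • t ⊆ t) {Y : Submodule ℝ E}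
    {y₀ z : E} (hy₀ : y₀ ∈ Y) {r b : ℝ} (hr : 0 < r)
    (hball : ∀ y ∈ Y, dist y y₀ < r → infDist y s ≤ b) (hz : z ∈ Y) (hz_norm : ‖z‖ = 1) :
    r * infDist z t ≤ 4 * b := by
  have hx : infDist y₀ s ≤ b := hball y₀ hy₀ (by simpa using hr)
  have hxz : infDist (y₀ + (r / 2) • z) s ≤ b := by
    refine hball _ (Y.add_mem hy₀ (Y.smul_mem _ hz)) ?_
    rw [dist_eq_norm, add_sub_cancel_left, norm_smul, hz_norm, mul_one, Real.norm_of_nonneg]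
    all_goals linarith
  linarith [mul_infDist_le_of_infDist_add_smul_le hs hst hs_smul ht_smul (half_pos hr) hx hxz]

end

theorem exists_nat_nonempty_interior_of_forall_exists_le_mul {Z : Type*} [TopologicalSpace Z]
    [BaireSpace Z] [Nonempty Z] {f : ℕ → Z → ℝ} (hf : ∀ n, Continuous (f n)) {g : ℕ → ℝ}
    (hg : ∀ n, 0 ≤ g n) (h : ∀ z, ∃ C : ℝ, ∀ n, f n z ≤ C * g n) :
    ∃ m : ℕ, (interior {z | ∀ n, f n z ≤ m * g n}).Nonempty := by
  refine nonempty_interior_of_iUnion_of_closed (fun m => ?_) (Set.eq_univ_of_forall fun z => ?_)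
  · simp only [Set.ofPred_forall]
    exact isClosed_iInter fun n => isClosed_le (hf n) continuous_const
  · obtain ⟨C, hC⟩ := h z
    exact Set.mem_iUnion.2 ⟨⌈C⌉₊, fun n =>
      (hC n).trans (mul_le_mul_of_nonneg_right (Nat.le_ceil C) (hg n))⟩

theorem far_implies_shapiro
    {X : Type*} [NormedAddCommGroup X] [NormedSpace ℝ X] [CompleteSpace X]
    (A : ℕ → Set X) (K : ℕ → ℕ) (hA : IsApproximationScheme A K)
    (Y : Submodule ℝ X) (hYc : IsClosed (Y : Set X))
    (c : ℝ) (hc : 0 < c)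
    (hfar : ∀ n : ℕ, ∀ δ > (0 : ℝ), ∃ y ∈ Y, ‖y‖ = 1 ∧ infDist y (A n) > c - δ) :
    ∀ ε : ℕ → ℝ, NullSeq ε →
      ∃ y ∈ Y, ¬ ∃ C : ℝ, ∀ n : ℕ, infDist y (A n) ≤ C * ε n := by
  rintro ε ⟨hε_nonneg, -, hε_lim⟩
  obtain ⟨-, hK, hsmul, -⟩ := hA
  have hne : ∀ n, (A n).Nonempty := fun n => by
    obtain ⟨z, -, -, hz⟩ := hfar n c hc
    by_contra! h
    simp [h] at hz
  by_contra! hbounded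
  have : CompleteSpace Y := hYc.completeSpace_coe
  obtain ⟨m, y₀, hy₀⟩ := exists_nat_nonempty_interior_of_forall_exists_le_mul
    (fun n => (continuous_infDist_pt (A n)).comp continuous_subtype_val) hε_nonneg
    (fun y : Y => hbounded y y.2)
  obtain ⟨r, hr, hball⟩ := Metric.mem_nhds_iff.1 (mem_interior_iff_mem_nhds.1 hy₀)
  have hkey : ∀ n, r * (c / 2) < 4 * (m * ε n) := fun n => by
    obtain ⟨z, hzY, hz_norm, hz_far⟩ := hfar (K n) (c / 2) (half_pos hc)
    have := mul_infDist_le_of_forall_dist_lt (hne n) (hK n).2 (hsmul n) (hsmul (K n)) y₀.2 hr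
      (fun y hy hdist => hball (show (⟨y, hy⟩ : Y) ∈ ball y₀ r from hdist) n) hzY hz_norm
    nlinarith
  have hlim : Tendsto (fun n => 4 * (m * ε n)) atTop (𝓝 0) := by
    simpa using (hε_lim.const_mul (m : ℝ)).const_mul 4
  obtain ⟨n, hn⟩ := (hlim.eventually (gt_mem_nhds (by positivity : 0 < r * (c / 2)))).exists
  exact (hkey n).not_gt hn
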